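/- Let g > 0, D > 0, a < b, and let η, u : [a,b] × [0,T] → ℝ be smooth functions solving the BBM-BBM system η_t + ((D+η)u)_x − (D²/6)η_{xxt} = 0, u_t + g η_x + u u_x − (D²/6)u_{xxt} = 0 on [a,b] × [0,T], subject to the homogeneous Dirichlet boundary conditions η(a,t) = η(b,t) = 0 and u(a,t) = u(b,t) = 0 for all t ∈ [0,T]. Then the impulse functional H(t) = ∫_a^b ( η u + (D²/6) η_x u_x ) dx is constant in t on [0,T]. -/

import Mathlib

open MeasureTheory Filter Set

/-- Partial derivative with respect to the first (spatial) variable. -/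
noncomputable def pdx (f : ℝ → ℝ → ℝ) : ℝ → ℝ → ℝ := fun x t => deriv (fun y => f y t) x

/-- Partial derivative with respect to the second (temporal) variable. -/
noncomputable def pdt (f : ℝ → ℝ → ℝ) : ℝ → ℝ → ℝ := fun x t => deriv (fun s => f x s) t

private lemma contDiff_pdx' {f : ℝ → ℝ → ℝ}
    (hf : ContDiff ℝ (⊤ : ℕ∞) fun p : ℝ × ℝ => f p.1 p.2) :
    ContDiff ℝ (⊤ : ℕ∞) fun p : ℝ × ℝ => pdx f p.1 p.2 := by
  have h : (fun p : ℝ × ℝ => pdx f p.1 p.2)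
      = fun p : ℝ × ℝ => fderiv ℝ (fun y => f y p.2) p.1 1 := by
    ext p; rfl
  rw [h]
  apply ContDiff.fderiv_apply (f := fun (p : ℝ × ℝ) (y : ℝ) => f y p.2)
    (g := Prod.fst) (k := fun _ => 1) (m := (⊤ : ℕ∞)) (n := (⊤ : ℕ∞))
  · exact hf.comp (contDiff_snd.prodMk (contDiff_snd.comp contDiff_fst))
  · exact contDiff_fst
  · exact contDiff_const
  · simp

private lemma contDiff_pdt' {f : ℝ → ℝ → ℝ}
    (hf : ContDiff ℝ (⊤ : ℕ∞) fun p : ℝ × ℝ => f p.1 p.2) :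
    ContDiff ℝ (⊤ : ℕ∞) fun p : ℝ × ℝ => pdt f p.1 p.2 := by
  have h : (fun p : ℝ × ℝ => pdt f p.1 p.2)
      = fun p : ℝ × ℝ => fderiv ℝ (fun s => f p.1 s) p.2 1 := by
    ext p; rfl
  rw [h]
  apply ContDiff.fderiv_apply (f := fun (p : ℝ × ℝ) (s : ℝ) => f p.1 s)
    (g := Prod.snd) (k := fun _ => 1) (m := (⊤ : ℕ∞)) (n := (⊤ : ℕ∞))
  · exact hf.comp ((contDiff_fst.comp contDiff_fst).prodMk contDiff_snd)
  · exact contDiff_snd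
  · exact contDiff_const
  · simp

private lemma hasDerivAt_slice_x {f : ℝ → ℝ → ℝ}
    (hf : ContDiff ℝ (⊤ : ℕ∞) fun p : ℝ × ℝ => f p.1 p.2) (x t : ℝ) :
    HasDerivAt (fun y => f y t) (pdx f x t) x := by
  have hd : DifferentiableAt ℝ (fun y => f y t) x :=
    ((hf.differentiable (by simp)).comp
      (differentiable_id.prodMk (differentiable_const t))).differentiableAt
  exact hd.hasDerivAt

private lemma hasDerivAt_slice_t {f : ℝ → ℝ → ℝ}
    (hf : ContDiff ℝ (⊤ : ℕ∞) fun p : ℝ × ℝ => f p.1 p.2) (x t : ℝ) :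
    HasDerivAt (fun s => f x s) (pdt f x t) t := by
  have hd : DifferentiableAt ℝ (fun s => f x s) t :=
    ((hf.differentiable (by simp)).comp
      ((differentiable_const x).prodMk differentiable_id)).differentiableAt
  exact hd.hasDerivAt
private lemma pdx_pdt_comm {f : ℝ → ℝ → ℝ}
    (hf : ContDiff ℝ (⊤ : ℕ∞) fun p : ℝ × ℝ => f p.1 p.2) (x t : ℝ) :
    pdx (pdt f) x t = pdt (pdx f) x t := by
  set F : ℝ × ℝ → ℝ := fun p => f p.1 p.2 with hFdef
  have hdF : Differentiable ℝ F := hf.differentiable (by simp)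
  have hF' : ContDiff ℝ (⊤ : ℕ∞) (fderiv ℝ F) := hf.fderiv_right (by simp)
  have hdF' : Differentiable ℝ (fderiv ℝ F) := hF'.differentiable (by simp)
  have line_x : ∀ t' y : ℝ, HasDerivAt (fun y' : ℝ => ((y', t') : ℝ × ℝ)) ((1, 0) : ℝ × ℝ) y :=
    fun t' y => (hasDerivAt_id y).prodMk (hasDerivAt_const y t')
  have line_t : ∀ y s : ℝ, HasDerivAt (fun s' : ℝ => ((y, s') : ℝ × ℝ)) ((0, 1) : ℝ × ℝ) s :=
    fun y s => (hasDerivAt_const s y).prodMk (hasDerivAt_id s)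
  have h1 : ∀ y s : ℝ, pdt f y s = fderiv ℝ F (y, s) (0, 1) := by
    intro y s
    exact (((hdF (y, s)).hasFDerivAt).comp_hasDerivAt s (line_t y s)).deriv
  have h2 : ∀ y s : ℝ, pdx f y s = fderiv ℝ F (y, s) (1, 0) := by
    intro y s
    exact (((hdF (y, s)).hasFDerivAt).comp_hasDerivAt y (line_x s y)).deriv
  -- derivative of y ↦ fderiv ℝ F (y, t) at x
  have hx : HasDerivAt (fun y => fderiv ℝ F (y, t))
      (fderiv ℝ (fderiv ℝ F) (x, t) (1, 0)) x :=
    ((hdF' (x, t)).hasFDerivAt).comp_hasDerivAt x (line_x t x)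
  have hx1 : HasDerivAt (fun y => fderiv ℝ F (y, t) (0, 1))
      (fderiv ℝ (fderiv ℝ F) (x, t) (1, 0) (0, 1)) x := by
    have := (ContinuousLinearMap.apply ℝ ℝ ((0, 1) : ℝ × ℝ)).hasFDerivAt.comp_hasDerivAt x hx
    exact this
  have ht : HasDerivAt (fun s => fderiv ℝ F (x, s))
      (fderiv ℝ (fderiv ℝ F) (x, t) (0, 1)) t :=
    ((hdF' (x, t)).hasFDerivAt).comp_hasDerivAt t (line_t x t)
  have ht1 : HasDerivAt (fun s => fderiv ℝ F (x, s) (1, 0))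
      (fderiv ℝ (fderiv ℝ F) (x, t) (0, 1) (1, 0)) t := by
    have := (ContinuousLinearMap.apply ℝ ℝ ((1, 0) : ℝ × ℝ)).hasFDerivAt.comp_hasDerivAt t ht
    exact this
  have e1 : pdx (pdt f) x t = fderiv ℝ (fderiv ℝ F) (x, t) (1, 0) (0, 1) := by
    have : (fun y => pdt f y t) = fun y => fderiv ℝ F (y, t) (0, 1) := by
      ext y; exact h1 y t
    show deriv (fun y => pdt f y t) x = _
    rw [this]; exact hx1.deriv
  have e2 : pdt (pdx f) x t = fderiv ℝ (fderiv ℝ F) (x, t) (0, 1) (1, 0) := by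
    have : (fun s => pdx f x s) = fun s => fderiv ℝ F (x, s) (1, 0) := by
      ext s; exact h2 x s
    show deriv (fun s => pdx f x s) t = _
    rw [this]; exact ht1.deriv
  rw [e1, e2]
  exact (hf.contDiffAt.isSymmSndFDerivAt (by rw [minSmoothness_of_isRCLikeNormedField]; exact WithTop.coe_le_coe.mpr (le_top : (2 : ℕ∞) ≤ ⊤))).eq _ _
private lemma interval_swap {f : ℝ → ℝ → ℝ}
    (hf : Continuous fun p : ℝ × ℝ => f p.1 p.2)
    {a b t₁ t₂ : ℝ} (hab : a ≤ b) (ht : t₁ ≤ t₂) :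
    ∫ x in a..b, ∫ s in t₁..t₂, f x s = ∫ s in t₁..t₂, ∫ x in a..b, f x s := by
  rw [intervalIntegral.integral_of_le hab, intervalIntegral.integral_of_le ht]
  simp_rw [intervalIntegral.integral_of_le ht, intervalIntegral.integral_of_le hab]
  have hint : Integrable (Function.uncurry f)
      ((volume.restrict (Ioc a b)).prod (volume.restrict (Ioc t₁ t₂))) := by
    rw [Measure.prod_restrict]
    have hcpt : IntegrableOn (Function.uncurry f) (Icc a b ×ˢ Icc t₁ t₂)
        ((volume : Measure ℝ).prod volume) :=
      hf.continuousOn.integrableOn_compact (isCompact_Icc.prod isCompact_Icc)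
    exact hcpt.mono_set (Set.prod_mono Ioc_subset_Icc_self Ioc_subset_Icc_self)
  exact integral_integral_swap hint

/-- `(η, u)` solves the BBM-BBM system with gravity `g` and depth `D` on `[a,b] × [0, T]`:
`η_t + ((D+η)u)_x − (D²/6)η_{xxt} = 0`, `u_t + g η_x + u u_x − (D²/6)u_{xxt} = 0`. -/
def IsBBMSolutionOn (g D a b T : ℝ) (η u : ℝ → ℝ → ℝ) : Prop :=
  ∀ x ∈ Set.Icc a b, ∀ t ∈ Set.Icc (0 : ℝ) T,
    pdt η x t + pdx (fun y s => (D + η y s) * u y s) x t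
      - D ^ 2 / 6 * pdt (pdx (pdx η)) x t = 0 ∧
    pdt u x t + g * pdx η x t + u x t * pdx u x t
      - D ^ 2 / 6 * pdt (pdx (pdx u)) x t = 0

/-- Conservation of the impulse functional
`H(t) = ∫_a^b ( η u + (D²/6) η_x u_x ) dx` for the BBM-BBM system on `[a,b]`
with homogeneous Dirichlet boundary conditions. -/
theorem impulse_conservation_dirichlet_bbm
    (g D a b T : ℝ) (hg : 0 < g) (hD : 0 < D) (hab : a < b)
    (η u : ℝ → ℝ → ℝ)
    (hη : ContDiff ℝ (⊤ : ℕ∞) (fun p : ℝ × ℝ => η p.1 p.2))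
    (hu : ContDiff ℝ (⊤ : ℕ∞) (fun p : ℝ × ℝ => u p.1 p.2))
    (hsol : IsBBMSolutionOn g D a b T η u)
    (hbcη : ∀ t ∈ Set.Icc (0 : ℝ) T, η a t = 0 ∧ η b t = 0)
    (hbcu : ∀ t ∈ Set.Icc (0 : ℝ) T, u a t = 0 ∧ u b t = 0) :
    ∀ t₁ ∈ Set.Icc (0 : ℝ) T, ∀ t₂ ∈ Set.Icc (0 : ℝ) T,
      (∫ x in a..b, (η x t₁ * u x t₁ + D ^ 2 / 6 * pdx η x t₁ * pdx u x t₁))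
        = ∫ x in a..b, (η x t₂ * u x t₂ + D ^ 2 / 6 * pdx η x t₂ * pdx u x t₂) := by
  -- smoothness of all the partial derivatives we need
  have hηx := contDiff_pdx' hη
  have hux := contDiff_pdx' hu
  have hηt := contDiff_pdt' hη
  have hut := contDiff_pdt' hu
  have hηxt := contDiff_pdt' hηx
  have huxt := contDiff_pdt' hux
  -- the integrand and its time derivative
  set F : ℝ → ℝ → ℝ :=
    fun x t => η x t * u x t + D ^ 2 / 6 * pdx η x t * pdx u x t with hFdef
  set Ft : ℝ → ℝ → ℝ := fun x t =>
    pdt η x t * u x t + η x t * pdt u x t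
      + D ^ 2 / 6 * (pdt (pdx η) x t * pdx u x t + pdx η x t * pdt (pdx u) x t)
    with hFtdef
  have hFcont : Continuous fun p : ℝ × ℝ => F p.1 p.2 := by
    apply Continuous.add
    · exact (hη.continuous).mul (hu.continuous)
    · exact (continuous_const.mul hηx.continuous).mul hux.continuous
  have hFtcont : Continuous fun p : ℝ × ℝ => Ft p.1 p.2 := by
    apply Continuous.add
    · exact ((hηt.continuous).mul (hu.continuous)).add
        ((hη.continuous).mul (hut.continuous))
    · exact continuous_const.mul
        (((hηxt.continuous).mul (hux.continuous)).add
          ((hηx.continuous).mul (huxt.continuous)))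
  -- time derivative of F, pointwise
  have hFt_deriv : ∀ x t : ℝ, HasDerivAt (fun s => F x s) (Ft x t) t := by
    intro x t
    have h1 := hasDerivAt_slice_t hη x t
    have h2 := hasDerivAt_slice_t hu x t
    have h3 := hasDerivAt_slice_t hηx x t
    have h4 := hasDerivAt_slice_t hux x t
    have hmain : HasDerivAt (fun s => η x s * u x s + D ^ 2 / 6 * pdx η x s * pdx u x s)
        (Ft x t) t := by
      have hh := (h1.mul h2).add ((h3.const_mul (D ^ 2 / 6)).mul h4)
      exact hh.congr_deriv (by simp only [hFtdef]; ring)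
    exact hmain
  -- the FTC in time
  have hFTCt : ∀ x t₁ t₂ : ℝ, ∫ s in t₁..t₂, Ft x s = F x t₂ - F x t₁ := by
    intro x t₁ t₂
    refine intervalIntegral.integral_eq_sub_of_hasDerivAt (fun s _ => hFt_deriv x s) ?_
    exact (hFtcont.comp (continuous_const.prodMk continuous_id)).intervalIntegrable _ _
  -- the spatial integral of Ft vanishes for t ∈ [0, T]
  have key0 : ∀ t ∈ Set.Icc (0 : ℝ) T, (∫ x in a..b, Ft x t) = 0 := by
    intro t ht
    set Q : ℝ → ℝ := fun y =>
      D ^ 2 / 6 * (pdt (pdx η) y t * u y t + η y t * pdt (pdx u) y t)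
        - (D / 2 * (u y t) ^ 2 + η y t * (u y t) ^ 2 + g / 2 * (η y t) ^ 2) with hQdef
    have hQderiv : ∀ x ∈ Set.uIcc a b, HasDerivAt Q (Ft x t) x := by
      intro x hx
      rw [Set.uIcc_of_le hab.le] at hx
      obtain ⟨e1, e2⟩ := hsol x hx t ht
      have d1 := hasDerivAt_slice_x hη x t
      have d2 := hasDerivAt_slice_x hu x t
      have d3 := hasDerivAt_slice_x hηxt x t
      have d4 := hasDerivAt_slice_x huxt x t
      -- product rule for ((D+η)u)_x
      have dprod : pdx (fun y s => (D + η y s) * u y s) x t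
          = pdx η x t * u x t + (D + η x t) * pdx u x t := by
        have hh : HasDerivAt (fun y => (D + η y t) * u y t)
            (pdx η x t * u x t + (D + η x t) * pdx u x t) x := by
          have := ((hasDerivAt_const x D).add d1).mul d2
          exact this.congr_deriv (by simp only [Pi.add_apply]; ring)
        exact hh.deriv
      have sw1 : pdx (pdt (pdx η)) x t = pdt (pdx (pdx η)) x t := pdx_pdt_comm hηx x t
      have sw2 : pdx (pdt (pdx u)) x t = pdt (pdx (pdx u)) x t := pdx_pdt_comm hux x t
      rw [dprod] at e1
      rw [← sw1] at e1
      rw [← sw2] at e2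
      have hQ' : HasDerivAt Q
          (D ^ 2 / 6 * ((pdx (pdt (pdx η)) x t * u x t + pdt (pdx η) x t * pdx u x t)
              + (pdx η x t * pdt (pdx u) x t + η x t * pdx (pdt (pdx u)) x t))
            - (D / 2 * (2 * u x t * pdx u x t)
              + (pdx η x t * (u x t) ^ 2 + η x t * (2 * u x t * pdx u x t))
              + g / 2 * (2 * η x t * pdx η x t))) x := by
        refine HasDerivAt.sub ?_ ?_
        · exact ((d3.mul d2).add (d1.mul d4)).const_mul (D ^ 2 / 6)
        · have hu2 : HasDerivAt (fun y => (u y t) ^ 2) (2 * u x t * pdx u x t) x := by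
            have := d2.pow 2
            exact this.congr_deriv (by ring)
          have hη2 : HasDerivAt (fun y => (η y t) ^ 2) (2 * η x t * pdx η x t) x := by
            have := d1.pow 2
            exact this.congr_deriv (by ring)
          exact ((hu2.const_mul (D / 2)).add (d1.mul hu2)).add (hη2.const_mul (g / 2))
      convert hQ' using 1
      simp only [hFtdef]
      linear_combination u x t * e1 + η x t * e2
    have hint : IntervalIntegrable (fun x => Ft x t) volume a b :=
      (hFtcont.comp (continuous_id.prodMk continuous_const)).intervalIntegrable _ _
    have := intervalIntegral.integral_eq_sub_of_hasDerivAt hQderiv hint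
    rw [this]
    obtain ⟨ha1, hb1⟩ := hbcη t ht
    obtain ⟨ha2, hb2⟩ := hbcu t ht
    simp [hQdef, ha1, hb1, ha2, hb2]
  -- main claim for ordered times
  have key : ∀ t₁ ∈ Set.Icc (0 : ℝ) T, ∀ t₂ ∈ Set.Icc (0 : ℝ) T, t₁ ≤ t₂ →
      (∫ x in a..b, F x t₁) = ∫ x in a..b, F x t₂ := by
    intro t₁ h₁ t₂ h₂ h12
    have hi1 : IntervalIntegrable (fun x => F x t₁) volume a b :=
      (hFcont.comp (continuous_id.prodMk continuous_const)).intervalIntegrable _ _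
    have hi2 : IntervalIntegrable (fun x => F x t₂) volume a b :=
      (hFcont.comp (continuous_id.prodMk continuous_const)).intervalIntegrable _ _
    have hsub : (∫ x in a..b, F x t₂) - ∫ x in a..b, F x t₁
        = ∫ x in a..b, (F x t₂ - F x t₁) := (intervalIntegral.integral_sub hi2 hi1).symm
    have hstep : ∫ x in a..b, (F x t₂ - F x t₁) = ∫ x in a..b, ∫ s in t₁..t₂, Ft x s :=
      intervalIntegral.integral_congr fun x _ => (hFTCt x t₁ t₂).symm
    have hswap : ∫ x in a..b, ∫ s in t₁..t₂, Ft x s = ∫ s in t₁..t₂, ∫ x in a..b, Ft x s :=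
      interval_swap hFtcont hab.le h12
    have hzero : ∫ s in t₁..t₂, (∫ x in a..b, Ft x s) = 0 := by
      have : ∫ s in t₁..t₂, (∫ x in a..b, Ft x s) = ∫ s in t₁..t₂, (0 : ℝ) := by
        refine intervalIntegral.integral_congr fun s hs => ?_
        rw [Set.uIcc_of_le h12] at hs
        exact key0 s ⟨le_trans h₁.1 hs.1, le_trans hs.2 h₂.2⟩
      simpa using this
    have : (∫ x in a..b, F x t₂) - ∫ x in a..b, F x t₁ = 0 := by
      rw [hsub, hstep, hswap, hzero]
    linarith
  intro t₁ ht₁ t₂ ht₂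
  rcases le_total t₁ t₂ with h | h
  · exact key t₁ ht₁ t₂ ht₂ h
  · exact (key t₂ ht₂ t₁ ht₁ h).symm
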